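/- arXiv:2105.12801 — 6 statements merged into one kernel-verified Lean document; each statement's English description precedes it below -/
import Mathlib

section
/- The tensor product of dialectica morphisms is a morphism: given lineale L and morphisms (f, F) : (U, X, α) → (U', X', α') and (g, G) : (V, Y, β) → (V', Y', β') in Dial(L), the pair (f × g, (f', g') ↦ (F ∘ f' ∘ g, G ∘ g' ∘ f)) is a morphism (U × V, X^V × Y^U, α ⊗ β) → (U' × V', X'^{V'} × Y'^{U'}, α' ⊗ β'), where (α ⊗ β)(u, v, (h, k)) = α(u, h v) ⊗_L β(v, k u). -/
structure Lineale (L : Type*) [PartialOrder L] where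
  tensor : L → L → L
  unit : L
  hom : L → L → L
  tensor_assoc : ∀ a b c : L, tensor (tensor a b) c = tensor a (tensor b c)
  tensor_unit : ∀ a : L, tensor a unit = a
  unit_tensor : ∀ a : L, tensor unit a = a
  tensor_mono : ∀ {a b a' b' : L}, a ≤ b → a' ≤ b' → tensor a a' ≤ tensor b b'
  adj : ∀ a b c : L, tensor b c ≤ a ↔ b ≤ hom c a
  hom_anti : ∀ {a b : L} (c : L), a ≤ b → hom b c ≤ hom a c
  hom_mono : ∀ (c : L) {a b : L}, a ≤ b → hom c a ≤ hom c b

structure DialOb (L : Type*) where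
  U : Type
  X : Type
  rel : U → X → L

def IsDialHom {L : Type*} [PartialOrder L] (A B : DialOb L)
    (f : A.U → B.U) (F : B.X → A.X) : Prop :=
  ∀ u y, A.rel u (F y) ≤ B.rel (f u) y

def tensorOb {L : Type*} [PartialOrder L] (M : Lineale L) (A B : DialOb L) : DialOb L :=
  ⟨A.U × B.U, (B.U → A.X) × (A.U → B.X),
   fun p q => M.tensor (A.rel p.1 (q.1 p.2)) (B.rel p.2 (q.2 p.1))⟩

theorem stmt7 {L : Type*} [PartialOrder L] (M : Lineale L)
    (A A' B B' : DialOb L)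
    (f : A.U → A'.U) (F : A'.X → A.X) (g : B.U → B'.U) (G : B'.X → B.X)
    (hf : IsDialHom A A' f F) (hg : IsDialHom B B' g G) :
    IsDialHom (tensorOb M A B) (tensorOb M A' B')
      (fun p => (f p.1, g p.2))
      (fun q => (fun v => F (q.1 (g v)), fun u => G (q.2 (f u)))) := by
  intro u y
  exact M.tensor_mono (hf u.1 _) (hg u.2 _)
end

section
/- The internal hom of dialectica morphisms is a morphism: given a lineale L and morphisms (f, F) : (U', X', α') → (U, X, α) and (g, G) : (V, Y, β) → (V', Y', β') in Dial(L), the pair ((h, H) ↦ (g ∘ h ∘ f, F ∘ H ∘ G), f × G) is a morphism [A, B] → [A', B'], where [A, B] = (V^U × X^Y, U × Y, (h, H, u, y) ↦ α(u, H y) ⊸ β(h u, y)). -/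
def homOb {L : Type*} [PartialOrder L] (M : Lineale L) (A B : DialOb L) : DialOb L :=
  ⟨(A.U → B.U) × (B.X → A.X), A.U × B.X,
   fun p q => M.hom (A.rel q.1 (p.2 q.2)) (B.rel (p.1 q.1) q.2)⟩

theorem stmt9 {L : Type*} [PartialOrder L] (M : Lineale L)
    (A A' B B' : DialOb L)
    (f : A'.U → A.U) (F : A.X → A'.X) (g : B.U → B'.U) (G : B'.X → B.X)
    (hf : IsDialHom A' A f F) (hg : IsDialHom B B' g G) :
    IsDialHom (homOb M A B) (homOb M A' B')
      (fun p => (g ∘ p.1 ∘ f, F ∘ p.2 ∘ G))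
      (fun q => (f q.1, G q.2)) := by
  intro p q
  exact le_trans (M.hom_anti _ (hf q.1 (p.2 (G q.2))))
    (M.hom_mono _ (hg (p.1 (f q.1)) q.2))
end

section
/- Tensor-hom adjunction in Dial(L): for objects A = (U, X, α), B = (V, Y, β), C = (W, Z, γ) of Dial(L), there is a bijection between morphisms A ⊗ B → C and morphisms A → [B, C], natural in A and C. Concretely, pairs (f : U × V → W, (F₁, F₂) : Z → X^V × Y^U) satisfying α(u, F₁(z)(v)) ⊗ β(v, F₂(z)(u)) ⊑ γ(f(u, v), z) correspond bijectively to pairs ((g₁, g₂) : U → W^V × Y^Z, G : V × Z → X) satisfying α(u, G(v, z)) ⊑ β(v, g₂(u)(z)) ⊸ γ(g₁(u)(v), z). -/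
theorem stmt10 {L : Type*} [PartialOrder L] (M : Lineale L) (B : DialOb L) :
    ∃ ψ : ∀ A C : DialOb L,
        ((A.U × B.U → C.U) × (C.X → (B.U → A.X) × (A.U → B.X))) →
        ((A.U → (B.U → C.U) × (C.X → B.X)) × (B.U × C.X → A.X)),
      (∀ A C : DialOb L, Function.Bijective (ψ A C)) ∧
      (∀ (A C : DialOb L) p,
        (∀ u v z,
          M.tensor (A.rel u ((p.2 z).1 v)) (B.rel v ((p.2 z).2 u)) ≤ C.rel (p.1 (u, v)) z)
          ↔
        (∀ u v z, A.rel u ((ψ A C p).2 (v, z)) ≤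
            M.hom (B.rel v (((ψ A C p).1 u).2 z)) (C.rel (((ψ A C p).1 u).1 v) z))) ∧
      (∀ (A C C' : DialOb L) (k : C.U → C'.U) (K : C'.X → C.X),
        IsDialHom C C' k K →
        ∀ p, ψ A C' (k ∘ p.1, p.2 ∘ K) =
          (fun u => (k ∘ ((ψ A C p).1 u).1, ((ψ A C p).1 u).2 ∘ K),
           fun q => (ψ A C p).2 (q.1, K q.2))) ∧
      (∀ (A' A C : DialOb L) (f : A'.U → A.U) (F : A.X → A'.X),
        IsDialHom A' A f F →
        ∀ p, ψ A' C (fun w => p.1 (f w.1, w.2),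
                     fun z => (F ∘ (p.2 z).1, (p.2 z).2 ∘ f)) =
          ((ψ A C p).1 ∘ f, F ∘ (ψ A C p).2)) := by
  refine ⟨fun A C p =>
    (fun u => (fun v => p.1 (u, v), fun z => (p.2 z).2 u),
     fun q => (p.2 q.2).1 q.1), ?_, ?_, ?_, ?_⟩
  · intro A C
    refine ⟨fun p q h => ?_, fun q => ⟨(fun w => (q.1 w.1).1 w.2,
      fun z => (fun v => q.2 (v, z), fun u => (q.1 u).2 z)), ?_⟩⟩
    · obtain ⟨f, F⟩ := p; obtain ⟨g, G⟩ := q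
      simp only [Prod.mk.injEq] at h
      obtain ⟨h1, h2⟩ := h
      refine Prod.ext ?_ ?_
      · funext w
        have := congrFun h1 w.1
        exact congrFun (congrArg Prod.fst this) w.2
      · funext z
        refine Prod.ext ?_ ?_
        · funext v; exact congrFun h2 (v, z)
        · funext u
          exact congrFun (congrArg Prod.snd (congrFun h1 u)) z
    · obtain ⟨g, G⟩ := q
      refine Prod.ext ?_ ?_
      · funext u; exact Prod.ext rfl rfl
      · funext q; rfl
  · intro A C p
    constructor
    · intro h u v z
      exact (M.adj _ _ _).mp (h u v z)
    · intro h u v z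
      exact (M.adj _ _ _).mpr (h u v z)
  · intro A C C' k K _ p; rfl
  · intro A' A C f F _ p; rfl
end

section
/- The product in Dial(L) is a categorical product: for objects A = (U, X, α) and B = (V, Y, β), the object A & B = (U × V, X + Y, α & β) with (α & β)((u, v), inl x) = α(u, x) and (α & β)((u, v), inr y) = β(v, y), together with the evident projection morphisms, satisfies the universal property of the binary product in Dial(L). -/
def withOb {L : Type*} (A B : DialOb L) : DialOb L :=
  ⟨A.U × B.U, A.X ⊕ B.X,
   fun p => Sum.elim (fun x => A.rel p.1 x) (fun y => B.rel p.2 y)⟩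

theorem stmt11 {L : Type*} [PartialOrder L] (A B : DialOb L) :
    IsDialHom (withOb A B) A Prod.fst Sum.inl ∧
    IsDialHom (withOb A B) B Prod.snd Sum.inr ∧
    ∀ (C : DialOb L) (f : C.U → A.U) (F : A.X → C.X) (g : C.U → B.U) (G : B.X → C.X),
      IsDialHom C A f F → IsDialHom C B g G →
      (IsDialHom C (withOb A B) (fun c => (f c, g c)) (Sum.elim F G) ∧
       (Prod.fst ∘ fun c => (f c, g c)) = f ∧ Sum.elim F G ∘ Sum.inl = F ∧
       (Prod.snd ∘ fun c => (f c, g c)) = g ∧ Sum.elim F G ∘ Sum.inr = G ∧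
       ∀ (h : C.U → (withOb A B).U) (H : (withOb A B).X → C.X),
         IsDialHom C (withOb A B) h H →
         Prod.fst ∘ h = f → H ∘ Sum.inl = F → Prod.snd ∘ h = g → H ∘ Sum.inr = G →
         h = (fun c => (f c, g c)) ∧ H = Sum.elim F G) := by
  refine ⟨fun u y => le_refl _, fun u y => le_refl _, fun C f F g G hf hg => ?_⟩
  refine ⟨fun u y => ?_, rfl, rfl, rfl, rfl, fun h H _ h1 h2 h3 h4 => ?_⟩
  · cases y with
    | inl x => exact hf u x
    | inr y => exact hg u y
  · constructor
    · funext c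
      have := congrFun h1 c
      have := congrFun h3 c
      simp_all [Function.comp]
      exact Prod.ext ‹_› ‹_›
    · funext y
      cases y with
      | inl x => exact congrFun h2 x
      | inr y => exact congrFun h4 y
end

section
/- The coproduct in Dial(L) is a categorical coproduct: for objects A = (U, X, α) and B = (V, Y, β), the object A ⊕ B = (U + V, X × Y, α ⊕ β) with (α ⊕ β)(inl u, (x, y)) = α(u, x) and (α ⊕ β)(inr v, (x, y)) = β(v, y), together with the evident injection morphisms, satisfies the universal property of the binary coproduct in Dial(L). -/
def plusOb {L : Type*} (A B : DialOb L) : DialOb L :=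
  ⟨A.U ⊕ B.U, A.X × B.X,
   fun s q => Sum.elim (fun u => A.rel u q.1) (fun v => B.rel v q.2) s⟩

theorem stmt12 {L : Type*} [PartialOrder L] (A B : DialOb L) :
    IsDialHom A (plusOb A B) Sum.inl Prod.fst ∧
    IsDialHom B (plusOb A B) Sum.inr Prod.snd ∧
    ∀ (C : DialOb L) (f : A.U → C.U) (F : C.X → A.X) (g : B.U → C.U) (G : C.X → B.X),
      IsDialHom A C f F → IsDialHom B C g G →
      (IsDialHom (plusOb A B) C (Sum.elim f g) (fun z => (F z, G z)) ∧
       Sum.elim f g ∘ Sum.inl = f ∧ (Prod.fst ∘ fun z : C.X => (F z, G z)) = F ∧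
       Sum.elim f g ∘ Sum.inr = g ∧ (Prod.snd ∘ fun z : C.X => (F z, G z)) = G ∧
       ∀ (h : (plusOb A B).U → C.U) (H : C.X → (plusOb A B).X),
         IsDialHom (plusOb A B) C h H →
         h ∘ Sum.inl = f → Prod.fst ∘ H = F → h ∘ Sum.inr = g → Prod.snd ∘ H = G →
         h = Sum.elim f g ∧ H = (fun z => (F z, G z))) := by
  refine ⟨fun u y => le_refl _, fun v y => le_refl _, fun C f F g G hf hg => ?_⟩
  refine ⟨?_, rfl, rfl, rfl, rfl, ?_⟩
  · rintro (u | v) z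
    · exact hf u z
    · exact hg v z
  · intro h H _ h1 h2 h3 h4
    constructor
    · funext s
      cases s with
      | inl u => exact congrFun h1 u
      | inr v => exact congrFun h3 v
    · funext z
      exact Prod.ext (congrFun h2 z) (congrFun h4 z)
end

section
/- The associator of the tensor in Dial(L) is a morphism: for objects A = (U, X, α), B = (V, Y, β), C = (W, Z, γ), the pair (assoc_{U,V,W}, A_{X,Y,Z}) — where assoc is the associator in Set and A_{X,Y,Z} is the canonical isomorphism X^{V×W} × (Y^W × Z^V)^U ≅ (X^V × Y^U)^W × Z^{U×V} — is an isomorphism (A ⊗ B) ⊗ C ≅ A ⊗ (B ⊗ C), and satisfies the morphism condition with equality: ((α ⊗ β) ⊗ γ)(((u,v),w), A(f,(g,h))) = (α ⊗ (β ⊗ γ))((u,(v,w)), (f,(g,h))). -/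
theorem stmt13 {L : Type*} [PartialOrder L] (M : Lineale L) (A B C : DialOb L) :
    IsDialHom (tensorOb M (tensorOb M A B) C) (tensorOb M A (tensorOb M B C))
      (fun p => (p.1.1, (p.1.2, p.2)))
      (fun q => (fun c => (fun b => q.1 (b, c), fun a => (q.2 a).1 c),
                 fun p => (q.2 p.1).2 p.2)) ∧
    (∀ (u : A.U) (v : B.U) (w : C.U)
        (q : ((B.U × C.U) → A.X) × (A.U → (C.U → B.X) × (B.U → C.X))),
      (tensorOb M (tensorOb M A B) C).rel ((u, v), w)
        ((fun c => (fun b => q.1 (b, c), fun a => (q.2 a).1 c),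
          fun p => (q.2 p.1).2 p.2))
        = (tensorOb M A (tensorOb M B C)).rel (u, (v, w)) q) ∧
    (IsDialHom (tensorOb M A (tensorOb M B C)) (tensorOb M (tensorOb M A B) C)
      (fun p => ((p.1, p.2.1), p.2.2))
      (fun q => (fun bc => (q.1 bc.2).1 bc.1,
                 fun a => (fun c => (q.1 c).2 a, fun b => q.2 (a, b)))) ∧
     ((fun p : A.U × (B.U × C.U) => ((p.1, p.2.1), p.2.2)) ∘
        (fun p : (A.U × B.U) × C.U => (p.1.1, (p.1.2, p.2)))) = id ∧
     ((fun p : (A.U × B.U) × C.U => (p.1.1, (p.1.2, p.2))) ∘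
        (fun p : A.U × (B.U × C.U) => ((p.1, p.2.1), p.2.2))) = id ∧
     ((fun q : ((B.U × C.U) → A.X) × (A.U → (C.U → B.X) × (B.U → C.X)) =>
         ((fun c => (fun b => q.1 (b, c), fun a => (q.2 a).1 c),
           fun p => (q.2 p.1).2 p.2)
           : (C.U → (B.U → A.X) × (A.U → B.X)) × ((A.U × B.U) → C.X))) ∘
        (fun q : (C.U → (B.U → A.X) × (A.U → B.X)) × ((A.U × B.U) → C.X) =>
         ((fun bc => (q.1 bc.2).1 bc.1,
           fun a => (fun c => (q.1 c).2 a, fun b => q.2 (a, b)))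
           : ((B.U × C.U) → A.X) × (A.U → (C.U → B.X) × (B.U → C.X))))) = id ∧
     ((fun q : (C.U → (B.U → A.X) × (A.U → B.X)) × ((A.U × B.U) → C.X) =>
         ((fun bc => (q.1 bc.2).1 bc.1,
           fun a => (fun c => (q.1 c).2 a, fun b => q.2 (a, b)))
           : ((B.U × C.U) → A.X) × (A.U → (C.U → B.X) × (B.U → C.X)))) ∘
        (fun q : ((B.U × C.U) → A.X) × (A.U → (C.U → B.X) × (B.U → C.X)) =>
         ((fun c => (fun b => q.1 (b, c), fun a => (q.2 a).1 c),
           fun p => (q.2 p.1).2 p.2)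
           : (C.U → (B.U → A.X) × (A.U → B.X)) × ((A.U × B.U) → C.X)))) = id) := by
  refine ⟨?_, ?_, ?_, rfl, rfl, rfl, rfl⟩
  · intro u q; simp [tensorOb, IsDialHom, M.tensor_assoc]
  · intro u v w q; simp [tensorOb, M.tensor_assoc]
  · intro u q; simp [tensorOb, IsDialHom, M.tensor_assoc]
end
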